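/- arXiv:1810.02676 — 5 statements merged into one kernel-verified Lean document; each statement's English description precedes it below -/
import Mathlib

section
/- Let f(α) = arctan((c_y + 2ρ·sin α − ρ)/(c_x + 2ρ·cos α)) with c_x + 2ρ·cos α > 0. If α_SL satisfies f(α_SL) = 0 and 0 < α_SL − π/2 < π (i.e. the tangential heading θ = α_SL − π/2 lies in (0, π)), then f'(α_SL) < 0, i.e. f is strictly decreasing at α_SL. -/
/-!
At `α_SL` the numerator `N α = c_y + 2ρ sin α - ρ` vanishes, so the quotient rule collapses to
`(N / D)' = N' / D` and `arctan' 0 = 1`; hence `f' α_SL = 2ρ cos α_SL / D α_SL`. The heading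
condition puts `α_SL` in `(π/2, 3π/2)`, where the cosine is negative, while `D α_SL > 0`.
-/

open Real

theorem HasDerivAt.div_of_eq_zero {𝕜 : Type*} [NontriviallyNormedField 𝕜] {u v : 𝕜 → 𝕜}
    {u' v' x : 𝕜} (hu : HasDerivAt u u' x) (hv : HasDerivAt v v' x) (hvx : v x ≠ 0)
    (hux : u x = 0) : HasDerivAt (fun y => u y / v y) (u' / v x) x := by
  refine (hu.div hv hvx).congr_deriv ?_
  rw [hux, zero_mul, sub_zero, sq, mul_div_mul_right _ _ hvx]

theorem HasDerivAt.arctan_of_eq_zero {u : ℝ → ℝ} {u' x : ℝ} (hu : HasDerivAt u u' x)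
    (hux : u x = 0) : HasDerivAt (fun y => Real.arctan (u y)) u' x := by
  simpa [hux] using hu.arctan

theorem HasDerivAt.arctan_div_of_eq_zero {u v : ℝ → ℝ} {u' v' x : ℝ} (hu : HasDerivAt u u' x)
    (hv : HasDerivAt v v' x) (hvx : v x ≠ 0) (hux : u x = 0) :
    HasDerivAt (fun y => Real.arctan (u y / v y)) (u' / v x) x :=
  (hu.div_of_eq_zero hv hvx hux).arctan_of_eq_zero (by simp [hux])

theorem stmt_4 (c_x c_y ρ α_SL : ℝ) (hρ : 0 < ρ)
    (f : ℝ → ℝ)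
    (hf : f = fun α => Real.arctan ((c_y + 2 * ρ * Real.sin α - ρ) / (c_x + 2 * ρ * Real.cos α)))
    (hden : 0 < c_x + 2 * ρ * Real.cos α_SL)
    (hzero : f α_SL = 0)
    (hθ1 : 0 < α_SL - π / 2) (hθ2 : α_SL - π / 2 < π) :
    deriv f α_SL < 0 := by
  subst hf
  have hnum : c_y + 2 * ρ * sin α_SL - ρ = 0 := by
    simpa [arctan_eq_zero_iff, hden.ne'] using hzero
  have hnum' : HasDerivAt (fun α => c_y + 2 * ρ * sin α - ρ) (2 * ρ * cos α_SL) α_SL :=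
    (((hasDerivAt_sin α_SL).const_mul (2 * ρ)).const_add c_y).sub_const ρ
  have hden' : HasDerivAt (fun α => c_x + 2 * ρ * cos α) (2 * ρ * -sin α_SL) α_SL :=
    ((hasDerivAt_cos α_SL).const_mul (2 * ρ)).const_add c_x
  have hcos : cos α_SL < 0 := cos_neg_of_pi_div_two_lt_of_lt (by linarith) (by linarith)
  rw [(hnum'.arctan_div_of_eq_zero hden' hden.ne' hnum).deriv]
  exact div_neg_of_neg_of_pos (mul_neg_of_pos_of_neg (by positivity) hcos) hden
end

section
/- Let ψ₁(α) = arctan((c_y + 2ρ·sin α + ρ)/(c_x + 2ρ·cos α)) and L(α) = √((c_x + 2ρ·cos α)² + (c_y + 2ρ·sin α + ρ)²). Then ψ₁'(α) = (2ρ/L(α))·cos(ψ₁(α) − α), provided c_x + 2ρ·cos α > 0 and L(α) > 2ρ. -/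
/-!
Writing `u = c_x + 2ρ cos α` and `v = c_y + 2ρ sin α + ρ`, the angle `ψ₁ = arctan (v / u)` is the
polar angle of `(u, v)` because `u > 0`, so `cos ψ₁ = u / L` and `sin ψ₁ = v / L`. The quotient
rule gives `ψ₁' = (u v' - v u') / L² = 2ρ (u cos α + v sin α) / L²`, and the numerator is
`2ρ L cos (ψ₁ - α)` by the subtraction formula.
-/

open Real

namespace Real

theorem sqrt_one_add_div_sq {u : ℝ} (hu : 0 < u) (v : ℝ) :
    √(1 + (v / u) ^ 2) = √(u ^ 2 + v ^ 2) / u := by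
  rw [eq_div_iff hu.ne', ← sqrt_sq hu.le, ← sqrt_mul (by positivity), sqrt_sq hu.le]
  congr 1
  field_simp

theorem cos_arctan_div {u : ℝ} (hu : 0 < u) (v : ℝ) :
    cos (arctan (v / u)) = u / √(u ^ 2 + v ^ 2) := by
  rw [cos_arctan, sqrt_one_add_div_sq hu, one_div_div]

theorem sin_arctan_div {u : ℝ} (hu : 0 < u) (v : ℝ) :
    sin (arctan (v / u)) = v / √(u ^ 2 + v ^ 2) := by
  rw [sin_arctan, sqrt_one_add_div_sq hu, div_div_div_cancel_right₀ hu.ne']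

theorem cos_arctan_div_sub {u : ℝ} (hu : 0 < u) (v α : ℝ) :
    cos (arctan (v / u) - α) = (u * cos α + v * sin α) / √(u ^ 2 + v ^ 2) := by
  rw [cos_sub, cos_arctan_div hu, sin_arctan_div hu]
  ring

end Real

theorem HasDerivAt.arctan_div {f g : ℝ → ℝ} {f' g' x : ℝ} (hf : HasDerivAt f f' x)
    (hg : HasDerivAt g g' x) (hx : g x ≠ 0) :
    HasDerivAt (fun y => Real.arctan (f y / g y))
      ((g x * f' - f x * g') / (g x ^ 2 + f x ^ 2)) x := by
  convert (hf.div hg hx).arctan using 1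
  · rfl
  simp only [Pi.div_apply]
  field_simp

theorem stmt_5_general (c_x c_y ρ α : ℝ)
    (ψ₁ : ℝ → ℝ)
    (hψ₁ : ψ₁ = fun α => Real.arctan ((c_y + 2 * ρ * Real.sin α + ρ) / (c_x + 2 * ρ * Real.cos α)))
    (L : ℝ → ℝ)
    (hL : L = fun α => Real.sqrt ((c_x + 2 * ρ * Real.cos α) ^ 2 + (c_y + 2 * ρ * Real.sin α + ρ) ^ 2))
    (hden : 0 < c_x + 2 * ρ * Real.cos α) :
    HasDerivAt ψ₁ ((2 * ρ / L α) * Real.cos (ψ₁ α - α)) α := by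
  subst hψ₁ hL
  set u := c_x + 2 * ρ * cos α
  set v := c_y + 2 * ρ * sin α + ρ
  have hu : HasDerivAt (fun α => c_x + 2 * ρ * cos α) (2 * ρ * -sin α) α :=
    ((hasDerivAt_cos α).const_mul (2 * ρ)).const_add c_x
  have hv : HasDerivAt (fun α => c_y + 2 * ρ * sin α + ρ) (2 * ρ * cos α) α :=
    (((hasDerivAt_sin α).const_mul (2 * ρ)).const_add c_y).add_const ρ
  have hnorm : 0 < u ^ 2 + v ^ 2 := by positivity
  convert HasDerivAt.arctan_div hv hu hden.ne' using 1
  rw [cos_arctan_div_sub hden, div_mul_div_comm, mul_self_sqrt hnorm.le]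
  ring

theorem stmt_5 (c_x c_y ρ α : ℝ)
    (ψ₁ : ℝ → ℝ)
    (hψ₁ : ψ₁ = fun α => Real.arctan ((c_y + 2 * ρ * Real.sin α + ρ) / (c_x + 2 * ρ * Real.cos α)))
    (L : ℝ → ℝ)
    (hL : L = fun α => Real.sqrt ((c_x + 2 * ρ * Real.cos α) ^ 2 + (c_y + 2 * ρ * Real.sin α + ρ) ^ 2))
    (hden : 0 < c_x + 2 * ρ * Real.cos α) (hLpos : 2 * ρ < L α) :
    HasDerivAt ψ₁ ((2 * ρ / L α) * Real.cos (ψ₁ α - α)) α :=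
  stmt_5_general c_x c_y ρ α ψ₁ hψ₁ L hL hden
end

section
/- With ψ₁, ψ₂ as above, let g(α) = −ψ₁(α) + ψ₂(α). Then g'(α) = tan(ψ₂(α))·sin(θ(α) − ψ₁(α) + ψ₂(α)) where θ(α) = α − π/2. In particular, if at α = α_SL we have 0 < ψ₂(α_SL) < π/2 and 0 < θ(α_SL) − ψ₁(α_SL) + ψ₂(α_SL) < π, then g'(α_SL) > 0. -/
/-!
The point `P(α) = (u α, v α)` runs along a circle of radius `r = 2ρ`, so
`P' = r (-sin α, cos α)`. Writing `P = N (cos ψ₁, sin ψ₁)` gives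
`ψ₁' = (r / N) cos (α - ψ₁)` and `N' = -r sin (α - ψ₁)`. Since `sin ψ₂ = r / N`,
differentiating `ψ₂ = arcsin (r / N)` gives `ψ₂' = tan ψ₂ sin ψ₂ sin (α - ψ₁)`, and the cosine
addition formula turns `g' = -sin ψ₂ cos (α - ψ₁) + ψ₂'` into `-tan ψ₂ cos (α - ψ₁ + ψ₂)`.
-/

open Real

lemma cos_arctan_div {a : ℝ} (b : ℝ) (ha : 0 < a) :
    cos (arctan (b / a)) = a / √(a ^ 2 + b ^ 2) := by
  rw [cos_arctan, show 1 + (b / a) ^ 2 = (a ^ 2 + b ^ 2) / a ^ 2 by field_simp,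
    sqrt_div' _ (sq_nonneg a), sqrt_sq ha.le, one_div_div]

lemma sin_arctan_div {a : ℝ} (b : ℝ) (ha : 0 < a) :
    sin (arctan (b / a)) = b / √(a ^ 2 + b ^ 2) := by
  rw [sin_arctan, show 1 + (b / a) ^ 2 = (a ^ 2 + b ^ 2) / a ^ 2 by field_simp,
    sqrt_div' _ (sq_nonneg a), sqrt_sq ha.le]
  field_simp

lemma neg_sin_mul_cos_add_tan_mul_sin_mul_sin {β : ℝ} (γ : ℝ) (hβ : cos β ≠ 0) :
    -(sin β * cos γ) + tan β * sin β * sin γ = tan β * sin (γ - π / 2 + β) := by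
  rw [tan_eq_sin_div_cos, sub_add_eq_add_sub, sin_sub_pi_div_two, cos_add]
  field_simp
  ring

section
variable {u v : ℝ → ℝ} {u' v' r x : ℝ}

lemma hasDerivAt_arctan_div (hu : HasDerivAt u u' x) (hv : HasDerivAt v v' x) (hx : u x ≠ 0) :
    HasDerivAt (fun y => arctan (v y / u y))
      ((u x * v' - v x * u') / (u x ^ 2 + v x ^ 2)) x := by
  refine (hv.fun_div hu hx).arctan.congr_deriv ?_
  field_simp

lemma hasDerivAt_sqrt_sq_add_sq (hu : HasDerivAt u u' x) (hv : HasDerivAt v v' x) (hx : u x ≠ 0) :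
    HasDerivAt (fun y => √(u y ^ 2 + v y ^ 2))
      ((u x * u' + v x * v') / √(u x ^ 2 + v x ^ 2)) x := by
  refine (((hu.fun_pow 2).fun_add (hv.fun_pow 2)).sqrt (by positivity)).congr_deriv ?_
  field_simp
  ring

lemma hasDerivAt_arcsin_const_div {L : ℝ → ℝ} {L' c : ℝ} (hL : HasDerivAt L L' x)
    (hc : |c| < L x) :
    HasDerivAt (fun y => arcsin (c / L y)) (-tan (arcsin (c / L x)) * L' / L x) x := by
  have hL0 : 0 < L x := (abs_nonneg c).trans_lt hc
  have hcL : |c / L x| < 1 := by rwa [abs_div, abs_of_pos hL0, div_lt_one hL0]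
  obtain ⟨h₁, h₂⟩ := abs_lt.mp hcL
  have hquot := (hasDerivAt_const x c).div hL hL0.ne'
  refine ((hasDerivAt_arcsin h₁.ne' h₂.ne).comp x hquot).congr_deriv ?_
  rw [tan_arcsin]
  field_simp
  ring

lemma hasDerivAt_arctan_div_of_circle (hu : HasDerivAt u (-(r * sin x)) x)
    (hv : HasDerivAt v (r * cos x) x) (hx : 0 < u x) :
    HasDerivAt (fun y => arctan (v y / u y))
      (r / √(u x ^ 2 + v x ^ 2) * cos (x - arctan (v x / u x))) x := by
  refine (hasDerivAt_arctan_div hu hv hx.ne').congr_deriv ?_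
  rw [cos_sub, cos_arctan_div _ hx, sin_arctan_div _ hx]
  field_simp
  rw [sq_sqrt (by positivity)]
  ring

lemma hasDerivAt_sqrt_sq_add_sq_of_circle (hu : HasDerivAt u (-(r * sin x)) x)
    (hv : HasDerivAt v (r * cos x) x) (hx : 0 < u x) :
    HasDerivAt (fun y => √(u y ^ 2 + v y ^ 2)) (-(r * sin (x - arctan (v x / u x)))) x := by
  refine (hasDerivAt_sqrt_sq_add_sq hu hv hx.ne').congr_deriv ?_
  rw [sin_sub, cos_arctan_div _ hx, sin_arctan_div _ hx]
  field_simp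
  ring

lemma hasDerivAt_neg_arctan_add_arcsin_of_circle (hu : HasDerivAt u (-(r * sin x)) x)
    (hv : HasDerivAt v (r * cos x) x) (hx : 0 < u x) (hr : 0 < r)
    (hrN : r < √(u x ^ 2 + v x ^ 2)) :
    HasDerivAt (fun y => -arctan (v y / u y) + arcsin (r / √(u y ^ 2 + v y ^ 2)))
      (tan (arcsin (r / √(u x ^ 2 + v x ^ 2))) *
        sin (x - π / 2 - arctan (v x / u x) + arcsin (r / √(u x ^ 2 + v x ^ 2)))) x := by
  set N := √(u x ^ 2 + v x ^ 2)
  set ψ₁ := arctan (v x / u x)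
  set ψ₂ := arcsin (r / N)
  have hN : 0 < N := hr.trans hrN
  have hq₁ : r / N < 1 := (div_lt_one hN).mpr hrN
  have hq₀ : 0 < r / N := by positivity
  have hsin : sin ψ₂ = r / N := sin_arcsin (by linarith) hq₁.le
  have hcos : cos ψ₂ ≠ 0 := by
    rw [cos_arcsin]
    exact (sqrt_pos.mpr (by nlinarith)).ne'
  have hψ₂' := hasDerivAt_arcsin_const_div (hasDerivAt_sqrt_sq_add_sq_of_circle hu hv hx)
    (by rwa [abs_of_pos hr])
  refine ((hasDerivAt_arctan_div_of_circle hu hv hx).fun_neg.fun_add hψ₂').congr_deriv ?_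
  calc _ = -(sin ψ₂ * cos (x - ψ₁)) + tan ψ₂ * sin ψ₂ * sin (x - ψ₁) := by
        rw [hsin]; ring
    _ = _ := by rw [neg_sin_mul_cos_add_tan_mul_sin_mul_sin _ hcos, sub_right_comm]

end

theorem stmt_7 (c_x c_y ρ α_SL : ℝ) (hρ : 0 < ρ)
    (L : ℝ → ℝ)
    (hL : L = fun α => Real.sqrt ((c_x + 2 * ρ * Real.cos α) ^ 2 + (c_y + 2 * ρ * Real.sin α + ρ) ^ 2))
    (ψ₁ : ℝ → ℝ)
    (hψ₁ : ψ₁ = fun α => Real.arctan ((c_y + 2 * ρ * Real.sin α + ρ) / (c_x + 2 * ρ * Real.cos α)))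
    (ψ₂ : ℝ → ℝ)
    (hψ₂ : ψ₂ = fun α => Real.arcsin (2 * ρ / L α))
    (g : ℝ → ℝ) (hg : g = fun α => -ψ₁ α + ψ₂ α)
    (θ : ℝ → ℝ) (hθ : θ = fun α => α - π / 2)
    (hden : ∀ α, 0 < c_x + 2 * ρ * Real.cos α)
    (hLgt : ∀ α, 2 * ρ < L α) :
    (∀ α, HasDerivAt g (Real.tan (ψ₂ α) * Real.sin (θ α - ψ₁ α + ψ₂ α)) α) ∧
    ((0 < ψ₂ α_SL ∧ ψ₂ α_SL < π / 2) →
      (0 < θ α_SL - ψ₁ α_SL + ψ₂ α_SL ∧ θ α_SL - ψ₁ α_SL + ψ₂ α_SL < π) →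
      0 < deriv g α_SL) := by
  have hg' : ∀ α, HasDerivAt g (tan (ψ₂ α) * sin (θ α - ψ₁ α + ψ₂ α)) α := fun α => by
    have hu : HasDerivAt (fun x => c_x + 2 * ρ * cos x) (-(2 * ρ * sin α)) α := by
      simpa using ((hasDerivAt_cos α).const_mul (2 * ρ)).const_add c_x
    have hv : HasDerivAt (fun x => c_y + 2 * ρ * sin x + ρ) (2 * ρ * cos α) α :=
      (((hasDerivAt_sin α).const_mul (2 * ρ)).const_add c_y).add_const ρ
    subst hL hψ₁ hψ₂ hg hθ
    exact hasDerivAt_neg_arctan_add_arcsin_of_circle hu hv (hden α) (by positivity)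
      (hLgt α)
  refine ⟨hg', fun hψ₂_mem hangle => ?_⟩
  rw [(hg' α_SL).deriv]
  exact mul_pos (tan_pos_of_pos_of_lt_pi_div_two hψ₂_mem.1 hψ₂_mem.2)
    (sin_pos_of_pos_of_lt_pi hangle.1 hangle.2)
end

section
/- Define φ₁(α) = mod(arctan((c_y + 2ρ sin α − ρ)/(c_x + 2ρ cos α)), 2π) and φ₂(α) = mod(α − φ₁(α) − π/2, 2π). Suppose at α_LS the inner arctan expression f(α) = arctan(...) is differentiable with f'(α_LS) = −k for some k > 0, f is continuous at α_LS, and φ₂(α_LS) = 0. Then for small δ > 0, φ₂(α_LS + δ) = (k + 1)δ + o(δ); in particular φ₂ is right-continuous at α_LS. -/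
/-!
Up to a multiple of `2π`, `α - φ₁ α - π/2` is the differentiable function `h α = α - f α - π/2`,
whose derivative at `α_LS` is `k + 1 > 0` and whose value there is a multiple of `2π`, since
`φ₂ α_LS = 0`. So just to the right of `α_LS`, `h` exceeds that multiple by less than `2π`: there
`φ₂ α = h α - h α_LS`, and the first-order expansion of `h` gives the claim.
-/

open Real Filter Asymptotics Topology

noncomputable def rmod (x y : ℝ) : ℝ := x - y * ⌊x / y⌋

section rmod

variable {p : ℝ}

lemma rmod_add_mul_intCast (x : ℝ) (m : ℤ) (hp : p ≠ 0) : rmod (x + p * m) p = rmod x p := by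
  have : (x + p * m) / p = x / p + m := by field_simp
  rw [rmod, rmod, this, Int.floor_add_intCast]
  push_cast
  ring

lemma rmod_sub_rmod (x y : ℝ) (hp : p ≠ 0) : rmod (x - rmod y p) p = rmod (x - y) p := by
  rw [← rmod_add_mul_intCast (x - y) ⌊y / p⌋ hp]
  congr 1
  rw [rmod]
  ring

lemma rmod_eq_self (hp : 0 < p) {t : ℝ} (ht₀ : 0 ≤ t) (ht : t < p) : rmod t p = t := by
  have : ⌊t / p⌋ = 0 := Int.floor_eq_zero_iff.2 ⟨div_nonneg ht₀ hp.le, (div_lt_one hp).2 ht⟩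
  simp [rmod, this]

lemma rmod_eq_sub_of_rmod_eq_zero (hp : 0 < p) {x y : ℝ} (hy : rmod y p = 0) (hyx : y ≤ x)
    (hxy : x < y + p) : rmod x p = x - y := by
  have hy' : y = p * ⌊y / p⌋ := by rw [rmod] at hy; linarith
  calc rmod x p = rmod (x - y + p * ⌊y / p⌋) p := by rw [← hy']; ring_nf
    _ = x - y := by
      rw [rmod_add_mul_intCast _ _ hp.ne', rmod_eq_self hp (by linarith) (by linarith)]

end rmod

lemma HasDerivAt.eventually_nhdsGT_lt {g : ℝ → ℝ} {c a : ℝ} (hg : HasDerivAt g c a)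
    (hc : 0 < c) : ∀ᶠ x in 𝓝[>] a, g a < g x := by
  have hslope : ∀ᶠ x in 𝓝[>] a, 0 < slope g a x :=
    (hasDerivAt_iff_tendsto_slope.1 hg).eventually (eventually_gt_nhds hc)
      |>.filter_mono (nhdsGT_le_nhdsNE a)
  filter_upwards [hslope, self_mem_nhdsWithin] with x hx hax
  rw [slope_def_field] at hx
  exact sub_pos.1 ((div_pos_iff_of_pos_right (sub_pos.2 hax)).1 hx)

section sawtooth

variable {g : ℝ → ℝ} {c a p : ℝ}

lemma rmod_comp_eventuallyEq_sub (hg : HasDerivAt g c a) (hc : 0 < c) (hp : 0 < p)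
    (hga : rmod (g a) p = 0) : (fun x => rmod (g x) p) =ᶠ[𝓝[>] a] fun x => g x - g a := by
  have hclose : ∀ᶠ x in 𝓝[>] a, g x < g a + p :=
    (hg.continuousAt.eventually (eventually_lt_nhds (lt_add_of_pos_right _ hp))).filter_mono
      nhdsWithin_le_nhds
  filter_upwards [hg.eventually_nhdsGT_lt hc, hclose] with x hx hx'
  exact rmod_eq_sub_of_rmod_eq_zero hp hga hx.le hx'

lemma tendsto_rmod_comp_nhdsGT (hg : HasDerivAt g c a) (hc : 0 < c) (hp : 0 < p)
    (hga : rmod (g a) p = 0) : Tendsto (fun x => rmod (g x) p) (𝓝[>] a) (𝓝 0) := by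
  refine Tendsto.congr' (rmod_comp_eventuallyEq_sub hg hc hp hga).symm ?_
  have : Tendsto (fun x => g x - g a) (𝓝 a) (𝓝 (g a - g a)) :=
    hg.continuousAt.tendsto.sub_const _
  simpa using this.mono_left nhdsWithin_le_nhds

lemma isLittleO_rmod_comp_sub (hg : HasDerivAt g c a) (hc : 0 < c) (hp : 0 < p)
    (hga : rmod (g a) p = 0) :
    (fun δ => rmod (g (a + δ)) p - c * δ) =o[𝓝[>] 0] fun δ => δ := by
  have hshift : Tendsto (a + ·) (𝓝[>] 0) (𝓝[>] a) := by
    refine tendsto_nhdsWithin_of_tendsto_nhds_of_eventually_within _ ?_ ?_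
    · simpa using ((continuous_const_add a).tendsto 0).mono_left nhdsWithin_le_nhds
    · filter_upwards [self_mem_nhdsWithin] with δ hδ
      exact lt_add_of_pos_right a hδ
  have hexp : (fun δ => g (a + δ) - g a - c * δ) =o[𝓝[>] 0] fun δ => δ := by
    simpa [mul_comm] using (hasDerivAt_iff_isLittleO_nhds_zero.1 hg).mono nhdsWithin_le_nhds
  refine hexp.congr' ?_ EventuallyEq.rfl
  filter_upwards [hshift.eventually (rmod_comp_eventuallyEq_sub hg hc hp hga)] with δ hδ
  rw [hδ]

end sawtooth

theorem stmt_10_general (α_LS k : ℝ) (hk : 0 < k)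
    (f : ℝ → ℝ)
    (φ₁ : ℝ → ℝ) (hφ₁ : φ₁ = fun α => rmod (f α) (2 * π))
    (φ₂ : ℝ → ℝ) (hφ₂ : φ₂ = fun α => rmod (α - φ₁ α - π / 2) (2 * π))
    (hderiv : HasDerivAt f (-k) α_LS)
    (hzero : φ₂ α_LS = 0) :
    (fun δ => φ₂ (α_LS + δ) - (k + 1) * δ) =o[nhdsWithin 0 (Set.Ioi 0)] (fun δ => δ) ∧
    Tendsto φ₂ (nhdsWithin α_LS (Set.Ioi α_LS)) (nhds (φ₂ α_LS)) := by
  have h2π : (0 : ℝ) < 2 * π := by positivity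
  have hφ₂_eq : φ₂ = fun α => rmod (α - f α - π / 2) (2 * π) := by
    funext α
    simp only [hφ₂, hφ₁]
    rw [sub_right_comm, rmod_sub_rmod _ _ h2π.ne', sub_right_comm]
  have hh : HasDerivAt (fun α => α - f α - π / 2) (k + 1) α_LS := by
    simpa [add_comm] using ((hasDerivAt_id α_LS).sub hderiv).sub_const (π / 2)
  have hk1 : 0 < k + 1 := by linarith
  rw [hzero]
  rw [hφ₂_eq] at hzero ⊢
  exact ⟨isLittleO_rmod_comp_sub hh hk1 h2π hzero, tendsto_rmod_comp_nhdsGT hh hk1 h2π hzero⟩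

theorem stmt_10 (c_x c_y ρ α_LS k : ℝ) (hk : 0 < k)
    (f : ℝ → ℝ)
    (hf : f = fun α => Real.arctan ((c_y + 2 * ρ * Real.sin α - ρ) / (c_x + 2 * ρ * Real.cos α)))
    (φ₁ : ℝ → ℝ) (hφ₁ : φ₁ = fun α => rmod (f α) (2 * π))
    (φ₂ : ℝ → ℝ) (hφ₂ : φ₂ = fun α => rmod (α - φ₁ α - π / 2) (2 * π))
    (hderiv : HasDerivAt f (-k) α_LS)
    (hcont : ContinuousAt f α_LS)
    (hzero : φ₂ α_LS = 0) :
    (fun δ => φ₂ (α_LS + δ) - (k + 1) * δ) =o[nhdsWithin 0 (Set.Ioi 0)] (fun δ => δ) ∧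
    Tendsto φ₂ (nhdsWithin α_LS (Set.Ioi α_LS)) (nhds (φ₂ α_LS)) :=
  stmt_10_general α_LS k hk f φ₁ hφ₁ φ₂ hφ₂ hderiv hzero
end

section
/- If p = (0,0), the target circle has center C = (c_x, c_y) and radius ρ, and ‖(c_x + ρ cos α, c_y + ρ sin α)‖ > 4ρ for every α ∈ [0, 2π), then c_x² + (c_y − ρ)² > 4ρ², i.e., the quantity under the square root in L_S^{LSR} = √(c_x² + (c_y − ρ)² − 4ρ²) is positive, so the LSR straight segment is well defined. -/
open Real

theorem stmt_17 (c_x c_y ρ : ℝ) (hρ : 0 < ρ)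
    (h4ρ : ∀ α ∈ Set.Ico 0 (2 * π),
      4 * ρ < Real.sqrt ((c_x + ρ * Real.cos α) ^ 2 + (c_y + ρ * Real.sin α) ^ 2)) :
    4 * ρ ^ 2 < c_x ^ 2 + (c_y - ρ) ^ 2 := by
  -- The bottom point of the circle, α = 3π/2, already gives the stronger bound 16ρ².
  have hα : π / 2 + π ∈ Set.Ico 0 (2 * π) := ⟨by positivity, by linarith [pi_pos]⟩
  have hbottom := h4ρ _ hα
  rw [cos_add_pi, sin_add_pi, cos_pi_div_two, sin_pi_div_two,
    lt_sqrt (by positivity)] at hbottom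
  nlinarith
end
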